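/- Transfer-matrix evaluation: the matrix Z_n(x) with entries [Z_n(x)]_{l,r} = Σ_{z_1,...,z_n ∈ F_2} (-1)^(Σ_{i=0}^{n} z_i z_{i+1} + Σ_{i=1}^{n}(1+x_i) z_i), where z_0 = l and z_{n+1} = r, equals 2^{N/2} · H Z^{1+x_1} H Z^{1+x_2} H ⋯ H Z^{1+x_n} H as a 2×2 real matrix, where N = n+1, H is the normalized Hadamard matrix (H² = I) and Z = diag(1,-1). -/

import Mathlib

/-- The normalized Hadamard matrix H = (1/√2)·[[1,1],[1,-1]], indexed by F_2,
with entries H_{ab} = (1/√2)·(-1)^(ab); it satisfies H² = I. -/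
noncomputable def Hmat : Matrix (ZMod 2) (ZMod 2) ℝ :=
  fun a b => (1 / Real.sqrt 2) * (-1 : ℝ) ^ (a * b).val

/-- The Pauli Z matrix diag(1,-1), indexed by F_2. -/
def Zmat : Matrix (ZMod 2) (ZMod 2) ℝ :=
  fun a b => if a = b then (-1 : ℝ) ^ a.val else 0

/-- The transfer-matrix partition function: [Z_n(x)]_{l,r} =
Σ_{z₁,…,z_n ∈ F_2} (-1)^(Σ_{i=0}^n z_i z_{i+1} + Σ_{i=1}^n (1+x_i) z_i),
with boundary conditions z₀ = l and z_{n+1} = r. -/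
def Zpart (n : ℕ) (x : Fin n → ZMod 2) : Matrix (ZMod 2) (ZMod 2) ℝ :=
  fun l r =>
    ∑ z : Fin n → ZMod 2,
      (-1 : ℝ) ^
        ((((∑ i ∈ (Finset.range (n + 1)).attach,
            (fun j : Fin (n + 2) =>
              if h0 : j.val = 0 then l else if h1 : j.val = n + 1 then r
              else z ⟨j.val - 1, by have := j.isLt; omega⟩)
              ⟨i.1, by have := Finset.mem_range.mp i.2; omega⟩ *
            (fun j : Fin (n + 2) =>
              if h0 : j.val = 0 then l else if h1 : j.val = n + 1 then r
              else z ⟨j.val - 1, by have := j.isLt; omega⟩)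
              ⟨i.1 + 1, by have := Finset.mem_range.mp i.2; omega⟩) +
          ∑ i : Fin n, (1 + x i) * z i) : ZMod 2).val)

/-! The sign map `a ↦ (-1)^a` turns the `𝔽₂`-sum in the exponent into a product, and
`(-1)^(a b) = √2 H_{ab}`, `(-1)^((1 + x) a) = (Z^(1+x))_{aa}`. So each summand of `Z_n(x)` is a
product of matrix entries along the path `l, z₁, …, zₙ, r`, and summing over the inner vertices
is matrix multiplication. -/

open Finset Matrix

lemma neg_one_pow_val_add {R : Type*} [Ring R] (a b : ZMod 2) :
    (-1 : R) ^ (a + b).val = (-1) ^ a.val * (-1) ^ b.val := by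
  rw [ZMod.val_add, ← neg_one_pow_eq_pow_mod_two, pow_add]

lemma neg_one_pow_val_mul {R : Type*} [Ring R] (a b : ZMod 2) :
    (-1 : R) ^ (a * b).val = ((-1) ^ a.val) ^ b.val := by
  rw [ZMod.val_mul, ← neg_one_pow_eq_pow_mod_two, pow_mul]

lemma neg_one_pow_val_sum {ι R : Type*} [CommRing R] (s : Finset ι)
    (f : ι → ZMod 2) : (-1 : R) ^ (∑ i ∈ s, f i).val = ∏ i ∈ s, (-1 : R) ^ (f i).val := by
  have hval : (∑ i ∈ s, f i).val = (∑ i ∈ s, (f i).val) % 2 := by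
    rw [← ZMod.val_natCast, Nat.cast_sum]
    simp only [ZMod.natCast_val, ZMod.cast_id', id]
  rw [hval, ← neg_one_pow_eq_pow_mod_two, prod_pow_eq_pow_sum]

lemma sum_attach_range_eq_sum_fin {M : Type*} [AddCommMonoid M] (n : ℕ) (f : Fin n → M) :
    ∑ i ∈ (range n).attach, f ⟨i.1, mem_range.mp i.2⟩ = ∑ i : Fin n, f i :=
  sum_bij' (fun i _ => ⟨i.1, mem_range.mp i.2⟩) (fun i _ => ⟨i.1, mem_range.mpr i.2⟩)
    (fun _ _ => mem_univ _) (fun _ _ => mem_attach _ _) (fun _ _ => rfl) (fun _ _ => rfl)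
    (fun _ _ => rfl)

section withBoundary

variable {α : Type*} {n : ℕ}

def withBoundary (l : α) (z : Fin n → α) (r : α) : Fin (n + 2) → α :=
  Fin.cons l (Fin.snoc z r)

lemma withBoundary_cons (l t r : α) (z : Fin n → α) :
    withBoundary l (Fin.cons t z) r = Fin.cons l (withBoundary t z r) := by
  simp only [withBoundary, Fin.cons_snoc_eq_snoc_cons]

@[simp]
lemma withBoundary_zero (l r : α) (z : Fin n → α) :
    withBoundary l z r 0 = l :=
  rfl

theorem Matrix.mul_prod_diagonal_mul_apply {R : Type*} [Fintype α] [DecidableEq α]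
    [CommSemiring R] (A : Matrix α α R) (d : Fin n → α → R) (l r : α) :
    (A * (List.ofFn fun i => diagonal (d i) * A).prod) l r =
      ∑ z : Fin n → α, (∏ i : Fin (n + 1),
        A (withBoundary l z r i.castSucc) (withBoundary l z r i.succ)) * ∏ i, d i (z i) := by
  induction n generalizing l with
  | zero => simp [withBoundary, Fin.snoc]
  | succ n ih =>
    rw [← (Fin.consEquiv fun _ : Fin (n + 1) => α).sum_comp, Fintype.sum_prod_type,
      List.ofFn_succ, List.prod_cons, Matrix.mul_assoc, ← Matrix.mul_assoc A, Matrix.mul_apply]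
    refine sum_congr rfl fun t _ => ?_
    simp only [mul_diagonal, ih, mul_sum]
    refine sum_congr rfl fun z _ => ?_
    change _ = (∏ i : Fin (n + 2), A (withBoundary l (Fin.cons t z) r i.castSucc)
      (withBoundary l (Fin.cons t z) r i.succ)) * ∏ i, d i ((Fin.cons t z : Fin (n + 1) → α) i)
    rw [withBoundary_cons, Fin.prod_univ_succ (n := n + 1),
      Fin.prod_univ_succ (fun i => d i ((Fin.cons t z : Fin (n + 1) → α) i))]
    simp only [Fin.cons_zero, Fin.cons_succ, Fin.castSucc_zero, ← Fin.succ_castSucc,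
      withBoundary_zero]
    ring

lemma dite_eq_withBoundary (l r : α) (z : Fin n → α) :
    (fun j : Fin (n + 2) =>
      if h0 : j.val = 0 then l else if h1 : j.val = n + 1 then r
      else z ⟨j.val - 1, by have := j.isLt; omega⟩) = withBoundary l z r := by
  funext j
  induction j using Fin.cases with
  | zero => rfl
  | succ k =>
    induction k using Fin.lastCases with
    | last => simp [withBoundary]
    | cast m => simp [withBoundary, m.isLt.ne]

end withBoundary

lemma Zpart_apply (n : ℕ) (x : Fin n → ZMod 2) (l r : ZMod 2) :
    Zpart n x l r = ∑ z : Fin n → ZMod 2, (-1 : ℝ) ^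
      ((∑ i : Fin (n + 1), withBoundary l z r i.castSucc * withBoundary l z r i.succ) +
        ∑ i, (1 + x i) * z i).val := by
  refine sum_congr rfl fun z _ => ?_
  rw [dite_eq_withBoundary]
  congr 3
  exact sum_attach_range_eq_sum_fin (n + 1) fun i =>
    withBoundary l z r i.castSucc * withBoundary l z r i.succ

lemma Zmat_pow (c : ℕ) : Zmat ^ c = diagonal fun a => ((-1 : ℝ) ^ a.val) ^ c := by
  rw [show Zmat = diagonal fun a => (-1 : ℝ) ^ a.val from rfl, diagonal_pow]
  rfl

lemma sqrt_two_mul_Hmat_apply (a b : ZMod 2) : √2 * Hmat a b = (-1) ^ (a * b).val := by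
  rw [Hmat, ← mul_assoc, mul_one_div_cancel (by positivity), one_mul]

/-- transfer-matrix evaluation:
Z_n(x) = 2^{N/2} · H Z^{1+x₁} H Z^{1+x₂} H ⋯ H Z^{1+x_n} H, with N = n+1. -/
theorem transfer_matrix_evaluation (n : ℕ) (x : Fin n → ZMod 2) :
    Zpart n x =
      (Real.sqrt 2) ^ (n + 1) •
        (Hmat * (List.ofFn fun i : Fin n => Zmat ^ ((1 : ZMod 2) + x i).val * Hmat).prod) := by
  ext l r
  simp only [Zmat_pow, Matrix.smul_apply, smul_eq_mul, Zpart_apply, mul_prod_diagonal_mul_apply,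
    mul_sum]
  refine sum_congr rfl fun z _ => ?_
  rw [neg_one_pow_val_add, neg_one_pow_val_sum, neg_one_pow_val_sum, ← mul_assoc,
    ← Fin.prod_const, ← prod_mul_distrib]
  simp only [sqrt_two_mul_Hmat_apply, mul_comm (1 + x _), neg_one_pow_val_mul]
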